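/- arXiv:2002.09649 — 2 statements merged into one kernel-verified Lean document; each statement's English description precedes it below -/
import Mathlib

section
/- Let A = [A_{i,j}]_{i,j=1}^m ∈ M_m(M_n) be PPT, i.e., both A and its partial transpose A^τ = [A_{j,i}]_{i,j=1}^m are positive semidefinite. Then (tr A) I_{mn} + (tr₂ A) ⊗ I_n ≥ I_m ⊗ (tr₁ A) + A. -/
open Matrix Kronecker
open scoped ComplexOrder

/-- The first partial trace of an `m × m` block matrix with `n × n` blocks:
the sum of the diagonal blocks. -/
noncomputable def ptrace1 (m n : ℕ) (A : Matrix (Fin m × Fin n) (Fin m × Fin n) ℂ) :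
    Matrix (Fin n) (Fin n) ℂ :=
  Matrix.of fun r s => ∑ i, A (i, r) (i, s)

/-- The second partial trace of an `m × m` block matrix with `n × n` blocks:
the `m × m` matrix of traces of the blocks. -/
noncomputable def ptrace2 (m n : ℕ) (A : Matrix (Fin m × Fin n) (Fin m × Fin n) ℂ) :
    Matrix (Fin m) (Fin m) ℂ :=
  Matrix.of fun i j => ∑ r, A (i, r) (j, r)

/-- The partial transpose of a block matrix: the `(i,j)` block of `Aᵗᵖ` is `A_{j,i}`. -/
noncomputable def ptranspose (m n : ℕ) (A : Matrix (Fin m × Fin n) (Fin m × Fin n) ℂ) :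
    Matrix (Fin m × Fin n) (Fin m × Fin n) ℂ :=
  Matrix.of fun p q => A (q.1, p.2) (p.1, q.2)

/-! The difference of the two sides is `(id ⊗ Λ)(Iₘ ⊗ tr₁ A + A)` for the reduction map
`Λ X = (tr X) • 1 - X`. The map `Λ ∘ transpose` is completely positive, with Kraus operators
`E_{rs} - E_{sr}`; hence `id ⊗ Λ` sends `B` to a positive semidefinite matrix as soon as the
partial transpose of `B` on the second factor is positive semidefinite. For
`B = Iₘ ⊗ tr₁ A + A` that partial transpose is `Iₘ ⊗ (tr₁ A)ᵀ + (A^τ)ᵀ`, which is positive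
semidefinite because `A` and `A^τ` are. -/

namespace Matrix

section PartialOperations

variable {ι κ α : Type*}

def partialTransposeRight (B : Matrix (ι × κ) (ι × κ) α) : Matrix (ι × κ) (ι × κ) α :=
  of fun p q => B (p.1, q.2) (q.1, p.2)

def traceRight [Fintype κ] [AddCommMonoid α] (B : Matrix (ι × κ) (ι × κ) α) : Matrix ι ι α :=
  of fun i j => ∑ t, B (i, t) (j, t)

/-- `(id ⊗ Λ) B` for the reduction map `Λ X = (tr X) • 1 - X` on the right factor. -/
def reductionRight [Fintype κ] [DecidableEq κ] [Ring α] (B : Matrix (ι × κ) (ι × κ) α) :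
    Matrix (ι × κ) (ι × κ) α :=
  traceRight B ⊗ₖ (1 : Matrix κ κ α) - B

@[simp]
lemma partialTransposeRight_partialTransposeRight (B : Matrix (ι × κ) (ι × κ) α) :
    partialTransposeRight (partialTransposeRight B) = B :=
  rfl

lemma partialTransposeRight_add [Add α] (B C : Matrix (ι × κ) (ι × κ) α) :
    partialTransposeRight (B + C) = partialTransposeRight B + partialTransposeRight C :=
  rfl

lemma partialTransposeRight_one_kronecker [DecidableEq ι] [MulZeroOneClass α]
    (X : Matrix κ κ α) :
    partialTransposeRight ((1 : Matrix ι ι α) ⊗ₖ X) = 1 ⊗ₖ Xᵀ := by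
  ext p q
  simp [partialTransposeRight, one_apply]

lemma traceRight_add [Fintype κ] [AddCommMonoid α] (B C : Matrix (ι × κ) (ι × κ) α) :
    traceRight (B + C) = traceRight B + traceRight C := by
  ext i j
  simp [traceRight, Finset.sum_add_distrib]

lemma traceRight_one_kronecker [Fintype κ] [DecidableEq ι] [Semiring α] (X : Matrix κ κ α) :
    traceRight ((1 : Matrix ι ι α) ⊗ₖ X) = X.trace • 1 := by
  ext i j
  by_cases h : i = j <;> simp [traceRight, one_apply, h, trace]

end PartialOperations

section Reduction

variable {ι κ : Type*} [Fintype ι] [Fintype κ] [DecidableEq ι] [DecidableEq κ]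

lemma sum_one_kronecker_mul_mul_conjTranspose_eq_two_smul_reductionRight {α : Type*}
    [CommRing α] [StarRing α] (C : Matrix (ι × κ) (ι × κ) α) :
    ∑ r, ∑ s, ((1 : Matrix ι ι α) ⊗ₖ (single r s 1 - single s r 1)) * C *
        ((1 : Matrix ι ι α) ⊗ₖ (single r s 1 - single s r 1))ᴴ =
      (2 : α) • reductionRight (partialTransposeRight C) := by
  ext p q
  simp only [reductionRight, traceRight, partialTransposeRight, sum_apply, mul_apply,
    kroneckerMap_apply, one_apply, sub_apply, single_apply, conjTranspose_apply, of_apply,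
    smul_apply, smul_eq_mul, ite_and, mul_sub, sub_mul, mul_ite, ite_mul, mul_one, mul_zero,
    one_mul, zero_mul, star_sub, apply_ite star, star_one, star_zero,
    Finset.sum_sub_distrib, Finset.sum_ite_irrel, Fintype.sum_prod_type, Finset.sum_ite_eq,
    Finset.sum_ite_eq', Finset.mem_univ, if_true, Finset.sum_const_zero]
  simp only [eq_comm (a := q.2)]
  split_ifs <;> ring

lemma PosSemidef.reductionRight {𝕜 : Type*} [RCLike 𝕜] {B : Matrix (ι × κ) (ι × κ) 𝕜}
    (hB : (partialTransposeRight B).PosSemidef) : (reductionRight B).PosSemidef := by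
  have hsum := posSemidef_sum Finset.univ fun r _ => posSemidef_sum Finset.univ fun s _ =>
    hB.mul_mul_conjTranspose_same ((1 : Matrix ι ι 𝕜) ⊗ₖ (single r s 1 - single s r 1))
  rw [sum_one_kronecker_mul_mul_conjTranspose_eq_two_smul_reductionRight,
    partialTransposeRight_partialTransposeRight] at hsum
  simpa [smul_smul] using hsum.smul (a := (2 : 𝕜)⁻¹) (by positivity)

end Reduction

end Matrix

section BlockMatrix

variable {m n : ℕ}

lemma ptrace1_eq_sum_submatrix (A : Matrix (Fin m × Fin n) (Fin m × Fin n) ℂ) :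
    ptrace1 m n A = ∑ i, A.submatrix (Prod.mk i) (Prod.mk i) := by
  ext r s
  simp [ptrace1, Matrix.sum_apply]

lemma Matrix.PosSemidef.ptrace1 {A : Matrix (Fin m × Fin n) (Fin m × Fin n) ℂ}
    (hA : A.PosSemidef) : (ptrace1 m n A).PosSemidef := by
  rw [ptrace1_eq_sum_submatrix]
  exact posSemidef_sum _ fun i _ => hA.submatrix _

lemma trace_ptrace1 (A : Matrix (Fin m × Fin n) (Fin m × Fin n) ℂ) :
    (ptrace1 m n A).trace = A.trace := by
  simp [ptrace1, trace, Fintype.sum_prod_type, Finset.sum_comm (γ := Fin m)]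

lemma ptrace2_eq_traceRight (A : Matrix (Fin m × Fin n) (Fin m × Fin n) ℂ) :
    ptrace2 m n A = traceRight A :=
  rfl

lemma partialTransposeRight_eq_transpose_ptranspose
    (A : Matrix (Fin m × Fin n) (Fin m × Fin n) ℂ) :
    partialTransposeRight A = (ptranspose m n A)ᵀ :=
  rfl

lemma reductionRight_one_kronecker_ptrace1_add (A : Matrix (Fin m × Fin n) (Fin m × Fin n) ℂ) :
    reductionRight ((1 : Matrix (Fin m) (Fin m) ℂ) ⊗ₖ ptrace1 m n A + A) =
      A.trace • (1 : Matrix (Fin m × Fin n) (Fin m × Fin n) ℂ)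
        + ptrace2 m n A ⊗ₖ (1 : Matrix (Fin n) (Fin n) ℂ)
        - ((1 : Matrix (Fin m) (Fin m) ℂ) ⊗ₖ ptrace1 m n A + A) := by
  rw [reductionRight, traceRight_add, traceRight_one_kronecker, trace_ptrace1,
    ← ptrace2_eq_traceRight, add_kronecker, smul_kronecker, one_kronecker_one]

end BlockMatrix

/-- If `A` is PPT (both `A` and its partial transpose are positive semidefinite), then
`(tr A) I_{mn} + (tr₂ A) ⊗ Iₙ ≥ Iₘ ⊗ (tr₁ A) + A`. -/
theorem stmt_5 (m n : ℕ) (A : Matrix (Fin m × Fin n) (Fin m × Fin n) ℂ)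
    (hA : A.PosSemidef) (hAτ : (ptranspose m n A).PosSemidef) :
    (A.trace • (1 : Matrix (Fin m × Fin n) (Fin m × Fin n) ℂ)
      + ptrace2 m n A ⊗ₖ (1 : Matrix (Fin n) (Fin n) ℂ)
      - ((1 : Matrix (Fin m) (Fin m) ℂ) ⊗ₖ ptrace1 m n A + A)).PosSemidef := by
  rw [← reductionRight_one_kronecker_ptrace1_add]
  apply PosSemidef.reductionRight
  rw [partialTransposeRight_add, partialTransposeRight_one_kronecker,
    partialTransposeRight_eq_transpose_ptranspose]
  exact (PosSemidef.one.kronecker hA.ptrace1.transpose).add hAτ.transpose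
end

section
/- Let A = [A_{i,j}]_{i,j=1}^m ∈ M_m(M_n) be positive semidefinite. Then (tr A) I_m ≥ tr₂ A, i.e., (tr A) I_m − tr₂ A is positive semidefinite; consequently (tr A) I_{mn} − (tr₂ A) ⊗ I_n is positive semidefinite. -/
/-!
Write `A(r)` for the principal `m × m` submatrix of `A` on the indices `(·, r)`. Then
`tr₂ A = ∑ᵣ A(r)` and `tr A = ∑ᵣ tr A(r)`, so `(tr A) Iₘ - tr₂ A = ∑ᵣ ((tr A(r)) Iₘ - A(r))`.
Each `A(r)` is positive semidefinite, and a positive semidefinite matrix is dominated by its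
trace times the identity because its largest eigenvalue is at most the sum of all of them.
The second claim is the first one tensored with `Iₙ`.
-/

open Matrix Kronecker
open scoped ComplexOrder

namespace Matrix

open MatrixOrder in
theorem PosSemidef.posSemidef_trace_smul_one_sub {𝕜 n : Type*} [RCLike 𝕜] [Fintype n]
    [DecidableEq n] {A : Matrix n n 𝕜} (hA : A.PosSemidef) :
    (A.trace • (1 : Matrix n n 𝕜) - A).PosSemidef := by
  have hle : A ≤ algebraMap ℝ (Matrix n n 𝕜) (∑ i, hA.1.eigenvalues i) := by
    refine le_algebraMap_of_spectrum_le (fun x hx => ?_) hA.1.isSelfAdjoint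
    obtain ⟨i, rfl⟩ := hA.1.spectrum_real_eq_range_eigenvalues ▸ hx
    exact Finset.single_le_sum (fun j _ => hA.eigenvalues_nonneg j) (Finset.mem_univ i)
  rwa [le_iff, Algebra.algebraMap_eq_smul_one, RCLike.real_smul_eq_coe_smul (K := 𝕜),
    RCLike.ofReal_sum, ← hA.1.trace_eq_sum_eigenvalues] at hle

theorem smul_one_sub_kronecker_one {α m n : Type*} [Ring α] [DecidableEq m] [DecidableEq n]
    (c : α) (P : Matrix m m α) :
    (c • (1 : Matrix m m α) - P) ⊗ₖ (1 : Matrix n n α) =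
      c • (1 : Matrix (m × n) (m × n) α) - P ⊗ₖ 1 := by
  ext ⟨i, r⟩ ⟨j, s⟩
  by_cases hrs : r = s <;> simp [kroneckerMap_apply, one_apply, hrs]

end Matrix

section PartialTrace

variable {m n : ℕ}

theorem ptrace2_eq_sum_submatrix (A : Matrix (Fin m × Fin n) (Fin m × Fin n) ℂ) :
    ptrace2 m n A = ∑ r, A.submatrix (·, r) (·, r) := by
  ext i j
  simp [ptrace2, Matrix.sum_apply]

theorem trace_eq_sum_trace_submatrix (A : Matrix (Fin m × Fin n) (Fin m × Fin n) ℂ) :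
    A.trace = ∑ r, (A.submatrix (·, r) (·, r)).trace := by
  simp only [trace, diag, submatrix_apply]
  rw [Fintype.sum_prod_type, Finset.sum_comm]

theorem Matrix.PosSemidef.posSemidef_trace_smul_one_sub_ptrace2
    {A : Matrix (Fin m × Fin n) (Fin m × Fin n) ℂ} (hA : A.PosSemidef) :
    (A.trace • (1 : Matrix (Fin m) (Fin m) ℂ) - ptrace2 m n A).PosSemidef := by
  rw [ptrace2_eq_sum_submatrix, trace_eq_sum_trace_submatrix, Finset.sum_smul,
    ← Finset.sum_sub_distrib]
  exact Finset.sum_induction _ PosSemidef (fun _ _ => PosSemidef.add) PosSemidef.zero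
    fun r _ => (hA.submatrix _).posSemidef_trace_smul_one_sub

end PartialTrace

/-- If `A` is positive semidefinite, then `(tr A) Iₘ ≥ tr₂ A`; consequently
`(tr A) I_{mn} − (tr₂ A) ⊗ Iₙ` is positive semidefinite. -/
theorem stmt_7 (m n : ℕ) (A : Matrix (Fin m × Fin n) (Fin m × Fin n) ℂ)
    (hA : A.PosSemidef) :
    (A.trace • (1 : Matrix (Fin m) (Fin m) ℂ) - ptrace2 m n A).PosSemidef ∧
    (A.trace • (1 : Matrix (Fin m × Fin n) (Fin m × Fin n) ℂ)
      - ptrace2 m n A ⊗ₖ (1 : Matrix (Fin n) (Fin n) ℂ)).PosSemidef := by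
  have hdom := hA.posSemidef_trace_smul_one_sub_ptrace2
  refine ⟨hdom, ?_⟩
  rw [← smul_one_sub_kronecker_one]
  exact hdom.kronecker PosSemidef.one
end
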